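/- For any quantum CHSH behavior (a,b ∈ {±1}, x,y ∈ {0,1}) arising from a state and ±1-valued observables, the CHSH value C and Bob's marginals satisfy C² + 4⟨b_y⟩² ≤ 8 for each y ∈ {0,1}; equivalently |⟨b_y⟩| ≤ ½√(8 − C²). -/
import Mathlib


open Matrix Kronecker
open scoped ComplexOrder

noncomputable def chshSign (x y : Fin 2) : ℝ := if x = 1 ∧ y = 1 then -1 else 1

private lemma kron_sub {dA dB : ℕ} (A : Matrix (Fin dA) (Fin dA) ℂ)
    (B C : Matrix (Fin dB) (Fin dB) ℂ) : A ⊗ₖ (B - C) = A ⊗ₖ B - A ⊗ₖ C := by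
  ext ⟨i,j⟩ ⟨k,l⟩
  simp [kroneckerMap_apply, mul_sub]

private lemma kron_conjT {dA dB : ℕ} (A : Matrix (Fin dA) (Fin dA) ℂ)
    (B : Matrix (Fin dB) (Fin dB) ℂ) : (A ⊗ₖ B)ᴴ = Aᴴ ⊗ₖ Bᴴ := by
  ext ⟨i,j⟩ ⟨k,l⟩
  simp [conjTranspose_apply, kroneckerMap_apply, star_mul', mul_comm]

private lemma trace_re_nonneg_of_psd {n : Type*} [Fintype n] [DecidableEq n] {P : Matrix n n ℂ}
    (hP : P.PosSemidef) : 0 ≤ P.trace.re := by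
  have h : ∀ i, 0 ≤ (P i i).re := by
    intro i
    have h2 := hP.re_dotProduct_nonneg (Pi.single i 1)
    simpa [dotProduct, mulVec, Pi.single_apply, Finset.mul_sum, mul_ite] using h2
  rw [Matrix.trace]
  simp only [Matrix.diag]
  rw [Complex.re_sum]
  exact Finset.sum_nonneg fun i _ => h i

private lemma trace_mul_sq_re_nonneg {n : Type*} [Fintype n] [DecidableEq n] {ρ : Matrix n n ℂ}
    (hρ : ρ.PosSemidef) (W : Matrix n n ℂ) (hW : Wᴴ = W) :
    0 ≤ ((ρ * (W * W)).trace).re := by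
  have h1 : (ρ * (W * W)).trace = (W * ρ * Wᴴ).trace := by
    rw [hW, ← Matrix.mul_assoc, Matrix.trace_mul_cycle]
  rw [h1]
  exact trace_re_nonneg_of_psd (hρ.mul_mul_conjTranspose_same W)

private lemma trace_smul_re {n : Type*} [Fintype n] (c : ℝ) (M : Matrix n n ℂ) :
    (((c:ℂ) • M).trace).re = c * (M.trace).re := by
  rw [Matrix.trace_smul, smul_eq_mul, Complex.re_ofReal_mul]

private lemma key_identity {dA dB : ℕ} (s t : ℂ)
    (a0 a1 : Matrix (Fin dA) (Fin dA) ℂ) (u v e f : Matrix (Fin dB) (Fin dB) ℂ)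
    (ha0 : a0 * a0 = 1) (ha1 : a1 * a1 = 1)
    (huv : u * u + v * v = (4:ℂ) • 1)
    (hee : e * e = 1) (hff : f * f = 1)
    (h4 : u * e + e * u = u * f + f * u)
    (h5 : (v * e + e * v) + (v * f + f * v) = 0) :
    (s • (a0 ⊗ₖ u + a1 ⊗ₖ v) + (2 * t) • ((1 : Matrix (Fin dA) (Fin dA) ℂ) ⊗ₖ e)) *
      (s • (a0 ⊗ₖ u + a1 ⊗ₖ v) + (2 * t) • ((1 : Matrix (Fin dA) (Fin dA) ℂ) ⊗ₖ e)) +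
    ((2 * t) • ((1 : Matrix (Fin dA) (Fin dA) ℂ) ⊗ₖ f) - s • (a0 ⊗ₖ u - a1 ⊗ₖ v)) *
      ((2 * t) • ((1 : Matrix (Fin dA) (Fin dA) ℂ) ⊗ₖ f) - s • (a0 ⊗ₖ u - a1 ⊗ₖ v)) =
    (8 * (s ^ 2 + t ^ 2)) • (1 : Matrix (Fin dA × Fin dB) (Fin dA × Fin dB) ℂ) := by
  set X := a0 ⊗ₖ u + a1 ⊗ₖ v with hX
  set Y := a0 ⊗ₖ u - a1 ⊗ₖ v with hY
  set E := (1 : Matrix (Fin dA) (Fin dA) ℂ) ⊗ₖ e with hE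
  set F := (1 : Matrix (Fin dA) (Fin dA) ℂ) ⊗ₖ f with hF
  have h14 : (1 : Matrix (Fin dA) (Fin dA) ℂ) ⊗ₖ (u*u) + (1 : Matrix (Fin dA) (Fin dA) ℂ) ⊗ₖ (v*v)
      = (4:ℂ) • (1 : Matrix (Fin dA × Fin dB) (Fin dA × Fin dB) ℂ) := by
    rw [← kronecker_add, huv, kronecker_smul, one_kronecker_one]
  have hEE : E * E = 1 := by
    rw [hE, ← mul_kronecker_mul, one_mul, hee, one_kronecker_one]
  have hFF : F * F = 1 := by
    rw [hF, ← mul_kronecker_mul, one_mul, hff, one_kronecker_one]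
  have hXX : X * X + Y * Y = (8:ℂ) • 1 := by
    calc X * X + Y * Y
        = ((1 : Matrix (Fin dA) (Fin dA) ℂ) ⊗ₖ (u*u) + (1 : Matrix (Fin dA) (Fin dA) ℂ) ⊗ₖ (v*v))
          + ((1 : Matrix (Fin dA) (Fin dA) ℂ) ⊗ₖ (u*u) + (1 : Matrix (Fin dA) (Fin dA) ℂ) ⊗ₖ (v*v)) := by
          simp only [hX, hY, add_mul, mul_add, sub_mul, mul_sub, ← mul_kronecker_mul, ha0, ha1]
          abel
      _ = (4:ℂ) • 1 + (4:ℂ) • 1 := by rw [h14]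
      _ = (8:ℂ) • 1 := by rw [← add_smul]; norm_num
  have hcross : (X * E + E * X) - (Y * F + F * Y) = 0 := by
    have h4' : (u * e + e * u) - (u * f + f * u) = 0 := sub_eq_zero.mpr h4
    calc (X * E + E * X) - (Y * F + F * Y)
        = a0 ⊗ₖ ((u * e + e * u) - (u * f + f * u)) + a1 ⊗ₖ ((v * e + e * v) + (v * f + f * v)) := by
          simp only [hX, hY, hE, hF, add_mul, mul_add, sub_mul, mul_sub, ← mul_kronecker_mul,
            one_mul, mul_one, kronecker_add, kron_sub]
          abel
      _ = 0 := by rw [h4', h5, kronecker_zero, kronecker_zero, add_zero]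
  calc (s • X + (2*t) • E) * (s • X + (2*t) • E) + ((2*t) • F - s • Y) * ((2*t) • F - s • Y)
      = (s*s) • (X * X + Y * Y) + ((2*t)*(2*t)) • (E * E + F * F)
        + (s*(2*t)) • ((X * E + E * X) - (Y * F + F * Y)) := by
        simp only [smul_mul_assoc, mul_smul_comm, add_mul, mul_add, sub_mul, mul_sub,
          smul_smul, smul_add, smul_sub]
        module
    _ = (8 * (s ^ 2 + t ^ 2)) • 1 := by
        rw [hXX, hEE, hFF, hcross]
        simp only [smul_zero, add_zero, smul_smul, smul_add]
        module

private lemma main_bound {dA dB : ℕ}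
    (ρ : Matrix (Fin dA × Fin dB) (Fin dA × Fin dB) ℂ)
    (hρ : ρ.PosSemidef) (hρ1 : ρ.trace = 1)
    (a0 a1 : Matrix (Fin dA) (Fin dA) ℂ) (u v e f : Matrix (Fin dB) (Fin dB) ℂ)
    (ha0 : a0 * a0 = 1) (ha1 : a1 * a1 = 1)
    (ha0H : a0ᴴ = a0) (ha1H : a1ᴴ = a1) (huH : uᴴ = u) (hvH : vᴴ = v)
    (heH : eᴴ = e) (hfH : fᴴ = f)
    (huv : u * u + v * v = (4:ℂ) • 1)
    (hee : e * e = 1) (hff : f * f = 1)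
    (h4 : u * e + e * u = u * f + f * u)
    (h5 : (v * e + e * v) + (v * f + f * v) = 0)
    (Cv mv : ℝ)
    (hCv : Cv = ((ρ * (a0 ⊗ₖ u)).trace).re + ((ρ * (a1 ⊗ₖ v)).trace).re)
    (hmv : mv = ((ρ * ((1 : Matrix (Fin dA) (Fin dA) ℂ) ⊗ₖ e)).trace).re) :
    Cv ^ 2 + 4 * mv ^ 2 ≤ 8 := by
  set r : ℝ := Cv ^ 2 + 4 * mv ^ 2 with hr
  have hr0 : 0 ≤ r := by positivity
  set X := a0 ⊗ₖ u + a1 ⊗ₖ v with hX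
  set Y := a0 ⊗ₖ u - a1 ⊗ₖ v with hY
  set E := (1 : Matrix (Fin dA) (Fin dA) ℂ) ⊗ₖ e with hE
  set F := (1 : Matrix (Fin dA) (Fin dA) ℂ) ⊗ₖ f with hF
  set V := ((Cv:ℝ):ℂ) • X + ((4*mv :ℝ):ℂ) • E with hV
  set Q := ((4*mv :ℝ):ℂ) • F - ((Cv:ℝ):ℂ) • Y with hQ
  have h2t : (2 * ((2*mv :ℝ):ℂ)) = ((4*mv :ℝ):ℂ) := by push_cast; ring
  have hid : V * V + Q * Q = ((8*r :ℝ):ℂ) • 1 := by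
    have h0 := key_identity ((Cv:ℝ):ℂ) ((2*mv:ℝ):ℂ) a0 a1 u v e f ha0 ha1 huv hee hff h4 h5
    rw [h2t] at h0
    rw [hV, hQ, hX, hY, hE, hF, h0]
    congr 1
    push_cast [hr]
    ring
  -- hermiticity
  have hVH : Vᴴ = V := by
    rw [hV, hX, hE]
    simp [conjTranspose_add, conjTranspose_smul, kron_conjT, ha0H, ha1H, huH, hvH, heH,
      conjTranspose_one, Complex.star_def, Complex.conj_ofReal]
  have hQH : Qᴴ = Q := by
    rw [hQ, hY, hF]
    simp [conjTranspose_sub, conjTranspose_smul, kron_conjT, ha0H, ha1H, huH, hvH, hfH,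
      conjTranspose_one, Complex.star_def, Complex.conj_ofReal]
  -- trace of ρ V
  have htrV : ((ρ * V).trace).re = r := by
    have hsplit : ρ * V = ((Cv:ℝ):ℂ) • (ρ * (a0 ⊗ₖ u)) + (((Cv:ℝ):ℂ) • (ρ * (a1 ⊗ₖ v))
        + ((4*mv :ℝ):ℂ) • (ρ * E)) := by
      rw [hV, hX]
      simp only [mul_add, mul_smul_comm, smul_add]
      abel
    rw [hsplit, Matrix.trace_add, Matrix.trace_add, Complex.add_re, Complex.add_re,
      trace_smul_re, trace_smul_re, trace_smul_re, hr, hCv, hmv, hE]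
    ring
  -- sum of traces
  have htrsum : ((ρ * (V*V)).trace).re + ((ρ * (Q*Q)).trace).re = 8*r := by
    have h1 : ρ * (V*V) + ρ * (Q*Q) = ((8*r:ℝ):ℂ) • ρ := by
      rw [← mul_add, hid, mul_smul_comm, mul_one]
    calc ((ρ * (V*V)).trace).re + ((ρ * (Q*Q)).trace).re
        = ((ρ * (V*V) + ρ * (Q*Q)).trace).re := by rw [Matrix.trace_add, Complex.add_re]
      _ = ((((8*r:ℝ):ℂ) • ρ).trace).re := by rw [h1]
      _ = 8*r := by rw [trace_smul_re, hρ1]; simp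
  -- Cauchy-Schwarz
  set W := V - ((r:ℝ):ℂ) • 1 with hW
  have hWH : Wᴴ = W := by
    rw [hW]
    simp [conjTranspose_sub, conjTranspose_smul, hVH, conjTranspose_one,
      Complex.star_def, Complex.conj_ofReal]
  have hWsq : W * W = V * V - (((r:ℝ):ℂ) + ((r:ℝ):ℂ)) • V + (((r:ℝ):ℂ) * ((r:ℝ):ℂ)) • 1 := by
    rw [hW]
    simp only [sub_mul, mul_sub, smul_mul_assoc, mul_smul_comm, one_mul, mul_one, smul_smul,
      add_smul]
    module
  have htrW : ((ρ * (W*W)).trace).re = ((ρ * (V*V)).trace).re - r^2 := by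
    have hsplit : ρ * (W*W) = ρ * (V*V) - ((2*r:ℝ):ℂ) • (ρ * V) + ((r^2:ℝ):ℂ) • ρ := by
      rw [hWsq]
      have c1 : (((r:ℝ):ℂ) + ((r:ℝ):ℂ)) = ((2*r:ℝ):ℂ) := by push_cast; ring
      have c2 : (((r:ℝ):ℂ) * ((r:ℝ):ℂ)) = ((r^2:ℝ):ℂ) := by push_cast; ring
      rw [c1, c2]
      simp only [mul_sub, mul_add, mul_smul_comm, mul_one]
    rw [hsplit]
    rw [Matrix.trace_add, Matrix.trace_sub, Complex.add_re, Complex.sub_re,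
      trace_smul_re, trace_smul_re, htrV, hρ1]
    simp
    ring
  have hp1 : 0 ≤ ((ρ * (W*W)).trace).re := trace_mul_sq_re_nonneg hρ W hWH
  have hp2 : 0 ≤ ((ρ * (Q*Q)).trace).re := trace_mul_sq_re_nonneg hρ Q hQH
  -- conclude
  have hfin : r^2 ≤ 8*r := by nlinarith [htrW, htrsum, hp1, hp2]
  nlinarith [hfin, hr0]

/-- Randomness–nonlocality tradeoff: for any quantum CHSH behavior arising from a state
`ρ` and `±1`-valued observables `A_x ⊗ B_y`, the CHSH value `C` and Bob's marginals
satisfy `C² + 4⟨b_y⟩² ≤ 8`, i.e. `|⟨b_y⟩| ≤ ½√(8-C²)`. -/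
theorem quantum_randomness_bound (dA dB : ℕ)
    (ρ : Matrix (Fin dA × Fin dB) (Fin dA × Fin dB) ℂ)
    (hρ : ρ.PosSemidef) (hρ1 : ρ.trace = 1)
    (A : Fin 2 → Matrix (Fin dA) (Fin dA) ℂ)
    (B : Fin 2 → Matrix (Fin dB) (Fin dB) ℂ)
    (hAH : ∀ x, (A x).IsHermitian) (hA2 : ∀ x, A x ^ 2 = 1)
    (hBH : ∀ y, (B y).IsHermitian) (hB2 : ∀ y, B y ^ 2 = 1)
    (C : ℝ)
    (hC : C = ∑ x : Fin 2, ∑ y : Fin 2, chshSign x y * ((ρ * (A x ⊗ₖ B y)).trace).re) :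
    ∀ y : Fin 2,
      C ^ 2 + 4 * (((ρ * ((1 : Matrix (Fin dA) (Fin dA) ℂ) ⊗ₖ B y)).trace).re) ^ 2 ≤ 8 := by
  intro y
  have ha0 : A 0 * A 0 = 1 := by rw [← sq]; exact hA2 0
  have ha1 : A 1 * A 1 = 1 := by rw [← sq]; exact hA2 1
  have hb0 : B 0 * B 0 = 1 := by rw [← sq]; exact hB2 0
  have hb1 : B 1 * B 1 = 1 := by rw [← sq]; exact hB2 1
  set u := B 0 + B 1 with hu
  set v := B 0 - B 1 with hv
  have huv : u * u + v * v = (4:ℂ) • 1 := by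
    rw [hu, hv]
    simp only [add_mul, mul_add, sub_mul, mul_sub, hb0, hb1]
    module
  have huH : uᴴ = u := by rw [hu, conjTranspose_add, (hBH 0).eq, (hBH 1).eq]
  have hvH : vᴴ = v := by rw [hv, conjTranspose_sub, (hBH 0).eq, (hBH 1).eq]
  have h40 : u * B 0 + B 0 * u = u * B 1 + B 1 * u := by
    rw [hu]
    simp only [add_mul, mul_add, hb0, hb1]
    module
  have h50 : (v * B 0 + B 0 * v) + (v * B 1 + B 1 * v) = 0 := by
    rw [hv]
    simp only [sub_mul, mul_sub, hb0, hb1]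
    module
  have h51 : (v * B 1 + B 1 * v) + (v * B 0 + B 0 * v) = 0 := by
    rw [add_comm]; exact h50
  have hCeq : C = ((ρ * (A 0 ⊗ₖ u)).trace).re + ((ρ * (A 1 ⊗ₖ v)).trace).re := by
    rw [hC, hu, hv, kronecker_add, kron_sub, mul_add, mul_sub,
      Matrix.trace_add, Matrix.trace_sub, Complex.add_re, Complex.sub_re]
    simp [Fin.sum_univ_two, chshSign]
    ring
  fin_cases y
  · exact main_bound ρ hρ hρ1 (A 0) (A 1) u v (B 0) (B 1) ha0 ha1 (hAH 0).eq (hAH 1).eq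
      huH hvH (hBH 0).eq (hBH 1).eq huv hb0 hb1 h40 h50 C _ hCeq rfl
  · exact main_bound ρ hρ hρ1 (A 0) (A 1) u v (B 1) (B 0) ha0 ha1 (hAH 0).eq (hAH 1).eq
      huH hvH (hBH 1).eq (hBH 0).eq huv hb1 hb0 h40.symm h51 C _ hCeq rfl
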